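/- arXiv:1801.00578 — 2 statements merged into one kernel-verified Lean document; each statement's English description precedes it below -/
import Mathlib

section
/- Weighted inverse inequality for polynomials (Bernardi–Maday): There exists a constant C > 0 such that for every integer p ≥ 1 and every real polynomial q of degree at most p, ∫_{−1}^{1} q(x)² dx ≤ C · p² · ∫_{−1}^{1} q(x)² · (1 − x²) dx. -/
open Polynomial

noncomputable section BM2

def BMu (n : ℕ) : Polynomial ℝ := (X ^ 2 - 1) ^ n
def BMQ (n : ℕ) : Polynomial ℝ := derivative^[n] (BMu n)

lemma BM_dIter (w : Polynomial ℝ) (k : ℕ) :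
    derivative (derivative^[k] w) = derivative^[k + 1] w :=
  (Function.iterate_succ_apply' derivative k w).symm

lemma BM_dX2 : derivative (X ^ 2 - 1 : Polynomial ℝ) = 2 * X := by
  simp [derivative_X_pow, map_ofNat]
  norm_num

/-- base differential identity -/
lemma BM_base (n : ℕ) :
    (X ^ 2 - 1 : Polynomial ℝ) * derivative (BMu n)
      = ((2 * n : ℕ) : Polynomial ℝ) * (X * BMu n) := by
  cases n with
  | zero => simp [BMu]
  | succ m =>
    simp only [BMu, derivative_pow, Nat.succ_sub_one, BM_dX2, C_eq_natCast]
    push_cast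
    ring

/-- iterated derivative of (X^2-1)*w -/
lemma BM_iter_mul (w : Polynomial ℝ) (m : ℕ) :
    derivative^[m + 2] ((X ^ 2 - 1) * w) =
      (X ^ 2 - 1) * derivative^[m + 2] w
        + ((2 * m + 4 : ℕ) : Polynomial ℝ) * (X * derivative^[m + 1] w)
        + (((m + 2) * (m + 1) : ℕ) : Polynomial ℝ) * derivative^[m] w := by
  induction m with
  | zero =>
    show derivative (derivative ((X ^ 2 - 1) * w)) = _
    simp only [derivative_mul, derivative_add, BM_dX2, derivative_X,
      show derivative (2 * X : Polynomial ℝ) = 2 by simp]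
    show _ = (X ^ 2 - 1) * derivative (derivative w) + _ * (X * derivative w) + _ * w
    push_cast
    ring
  | succ k ih =>
    rw [show k + 1 + 2 = (k + 2) + 1 from rfl, ← BM_dIter, ih]
    simp only [derivative_add, derivative_mul, derivative_natCast, BM_dX2, derivative_X,
      BM_dIter]
    simp only [Nat.add_assoc, Nat.reduceAdd]
    push_cast
    ring

lemma BM_iter_X (w : Polynomial ℝ) (m : ℕ) :
    derivative^[m + 1] (X * w) =
      X * derivative^[m + 1] w + ((m + 1 : ℕ) : Polynomial ℝ) * derivative^[m] w := by
  induction m with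
  | zero =>
    show derivative (X * w) = _
    simp only [Function.iterate_succ_apply, Function.iterate_zero_apply]
    rw [derivative_mul, derivative_X]
    push_cast; ring
  | succ k ih =>
    rw [show k + 1 + 1 = (k + 1) + 1 from rfl, ← BM_dIter, ih]
    simp only [derivative_add, derivative_mul, derivative_natCast, derivative_X, BM_dIter]
    simp only [Nat.add_assoc, Nat.reduceAdd]
    push_cast; ring

/-- the Legendre ODE -/
lemma BM_ode (n : ℕ) :
    derivative ((X ^ 2 - 1) * derivative (BMQ n))
      = ((n * (n + 1) : ℕ) : Polynomial ℝ) * BMQ n := by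
  cases n with
  | zero => simp [BMQ, BMu]
  | succ m =>
    have key : ∀ j : ℕ, derivative^[j] (derivative (BMu (m+1))) = derivative^[j+1] (BMu (m+1)) :=
      fun j => by rw [← Function.iterate_succ_apply]
    have h1 := congrArg (derivative^[m + 2]) (BM_base (m+1))
    rw [BM_iter_mul (derivative (BMu (m+1))) m] at h1
    rw [key (m+2), key (m+1), key m] at h1
    rw [show ((2 * (m+1) : ℕ) : Polynomial ℝ) * (X * BMu (m+1))
        = C ((2 * (m+1) : ℕ) : ℝ) * (X * BMu (m+1)) by rw [C_eq_natCast]] at h1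
    rw [iterate_derivative_C_mul, C_eq_natCast] at h1
    rw [show m + 2 = (m + 1) + 1 from rfl, BM_iter_X (BMu (m+1)) (m+1)] at h1
    have q1 : derivative (BMQ (m+1)) = derivative^[m+2] (BMu (m+1)) := BM_dIter _ _
    rw [derivative_mul, BM_dX2, q1, BM_dIter]
    simp only [Nat.add_assoc, Nat.reduceAdd] at h1 ⊢
    show 2 * X * derivative^[m+2] (BMu (m+1)) + (X^2-1) * derivative^[m+3] (BMu (m+1))
        = _ * derivative^[m+1] (BMu (m+1))
    push_cast at h1 ⊢
    linear_combination h1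


/-- factorization of iterated derivatives at +1 -/
lemma BM_fact_one (n : ℕ) : ∀ k, k ≤ n → ∃ s : Polynomial ℝ,
    derivative^[k] (BMu n) = (X - 1) ^ (n - k) * s ∧
      s.eval 1 = (n.descFactorial k : ℝ) * 2 ^ n := by
  intro k
  induction k with
  | zero =>
    intro _
    refine ⟨(X + 1) ^ n, ?_, by simp; norm_num⟩
    simp only [Function.iterate_zero_apply, BMu, Nat.sub_zero]
    rw [← mul_pow, show ((X - 1) * (X + 1) : Polynomial ℝ) = X ^ 2 - 1 by ring]
  | succ k ih =>
    intro hk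
    obtain ⟨s, hs, hev⟩ := ih (Nat.le_of_succ_le hk)
    have hnk : n - k = (n - (k+1)) + 1 := by omega
    refine ⟨((n - k : ℕ) : Polynomial ℝ) * s + (X - 1) * derivative s, ?_, ?_⟩
    · rw [← BM_dIter, hs, derivative_mul, derivative_pow, hnk]
      simp only [Nat.add_sub_cancel, C_eq_natCast, derivative_sub, derivative_one, derivative_X]
      push_cast
      ring
    · simp only [eval_add, eval_mul, eval_natCast, eval_sub, eval_one, eval_X]
      rw [Nat.descFactorial_succ]
      push_cast
      ring_nf
      rw [hev]
      push_cast
      try ring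

/-- factorization of iterated derivatives at -1 -/
lemma BM_fact_negone (n : ℕ) : ∀ k, k ≤ n → ∃ s : Polynomial ℝ,
    derivative^[k] (BMu n) = (X + 1) ^ (n - k) * s ∧
      s.eval (-1) = (n.descFactorial k : ℝ) * (-2) ^ n := by
  intro k
  induction k with
  | zero =>
    intro _
    refine ⟨(X - 1) ^ n, ?_, by simp; norm_num⟩
    simp only [Function.iterate_zero_apply, BMu, Nat.sub_zero]
    rw [← mul_pow, show ((X + 1) * (X - 1) : Polynomial ℝ) = X ^ 2 - 1 by ring]
  | succ k ih =>
    intro hk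
    obtain ⟨s, hs, hev⟩ := ih (Nat.le_of_succ_le hk)
    have hnk : n - k = (n - (k+1)) + 1 := by omega
    refine ⟨((n - k : ℕ) : Polynomial ℝ) * s + (X + 1) * derivative s, ?_, ?_⟩
    · rw [← BM_dIter, hs, derivative_mul, derivative_pow, hnk]
      simp only [Nat.add_sub_cancel, C_eq_natCast, derivative_add, derivative_one, derivative_X]
      push_cast
      ring
    · simp only [eval_add, eval_mul, eval_natCast, eval_one, eval_X]
      rw [Nat.descFactorial_succ]
      ring_nf
      rw [hev]
      push_cast
      ring

/-- vanishing of lower iterated derivatives at the endpoints -/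
lemma BM_vanish_one {n k : ℕ} (h : k < n) : (derivative^[k] (BMu n)).eval 1 = 0 := by
  obtain ⟨s, hs, -⟩ := BM_fact_one n k h.le
  rw [hs, eval_mul, eval_pow, eval_sub, eval_one, eval_X, sub_self,
    zero_pow (by omega : n - k ≠ 0), zero_mul]

lemma BM_vanish_negone {n k : ℕ} (h : k < n) : (derivative^[k] (BMu n)).eval (-1) = 0 := by
  obtain ⟨s, hs, -⟩ := BM_fact_negone n k h.le
  rw [hs, eval_mul, eval_pow, eval_add, eval_one, eval_X]
  norm_num
  exact Or.inl (by omega)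

lemma BM_Q_eval_one (n : ℕ) : (BMQ n).eval 1 = (n.factorial : ℝ) * 2 ^ n := by
  obtain ⟨s, hs, hev⟩ := BM_fact_one n n le_rfl
  rw [BMQ, hs, Nat.sub_self, pow_zero, one_mul, hev, Nat.descFactorial_self]

lemma BM_Q_eval_negone (n : ℕ) : (BMQ n).eval (-1) = (n.factorial : ℝ) * (-2) ^ n := by
  obtain ⟨s, hs, hev⟩ := BM_fact_negone n n le_rfl
  rw [BMQ, hs, Nat.sub_self, pow_zero, one_mul, hev, Nat.descFactorial_self]

/-- derivative values at endpoints from the ODE -/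
lemma BM_dQ_eval_one (n : ℕ) :
    2 * (derivative (BMQ n)).eval 1 = ((n * (n + 1) : ℕ) : ℝ) * (BMQ n).eval 1 := by
  have h := congrArg (eval (1 : ℝ)) (BM_ode n)
  rw [derivative_mul, BM_dX2] at h
  simpa using h

lemma BM_dQ_eval_negone (n : ℕ) :
    -2 * (derivative (BMQ n)).eval (-1) = ((n * (n + 1) : ℕ) : ℝ) * (BMQ n).eval (-1) := by
  have h := congrArg (eval (-1 : ℝ)) (BM_ode n)
  rw [derivative_mul, BM_dX2] at h
  simp at h
  push_cast
  linarith [h]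


open MeasureTheory intervalIntegral

/-- integral over (-1,1) of a polynomial -/
def PI (r : Polynomial ℝ) : ℝ := ∫ x in (-1 : ℝ)..1, r.eval x

lemma pII (r : Polynomial ℝ) : IntervalIntegrable (fun x => r.eval x) volume (-1 : ℝ) 1 :=
  r.continuous.intervalIntegrable _ _

lemma PI_add (r s : Polynomial ℝ) : PI (r + s) = PI r + PI s := by
  simp only [PI, eval_add]
  exact integral_add (pII r) (pII s)

lemma PI_smul (a : ℝ) (r : Polynomial ℝ) : PI (C a * r) = a * PI r := by
  simp only [PI, eval_mul, eval_C]
  exact integral_const_mul a _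

lemma PI_sum {ι : Type*} (s : Finset ι) (f : ι → Polynomial ℝ) :
    PI (∑ i ∈ s, f i) = ∑ i ∈ s, PI (f i) := by
  simp only [PI, eval_finset_sum]
  exact intervalIntegral.integral_finset_sum fun i _ => pII (f i)

lemma PI_sq_nonneg (r : Polynomial ℝ) : 0 ≤ PI (r * r) := by
  apply intervalIntegral.integral_nonneg (by norm_num : (-1:ℝ) ≤ 1)
  intro x _
  simp only [eval_mul]
  exact mul_self_nonneg _

/-- integration by parts for polynomials on (-1,1) -/
lemma PI_ibp (f g : Polynomial ℝ) :
    PI (f * derivative g) =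
      f.eval 1 * g.eval 1 - f.eval (-1) * g.eval (-1) - PI (derivative f * g) := by
  have h := integral_deriv_mul_eq_sub (a := (-1:ℝ)) (b := 1)
      (u := fun x => f.eval x) (v := fun x => g.eval x)
      (u' := fun x => (derivative f).eval x) (v' := fun x => (derivative g).eval x)
      (fun x _ => f.hasDerivAt x) (fun x _ => g.hasDerivAt x)
      (pII _) (pII _)
  have h2 : ∫ x in (-1:ℝ)..1, ((derivative f).eval x * g.eval x + f.eval x * (derivative g).eval x)
      = PI (derivative f * g) + PI (f * derivative g) := by
    rw [show PI (derivative f * g) + PI (f * derivative g)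
        = PI (derivative f * g + f * derivative g) from (PI_add _ _).symm]
    simp only [PI, eval_add, eval_mul]
  rw [h2] at h
  linarith [h]

/-- iterated integration by parts against BMQ -/
lemma BM_iter_parts (n : ℕ) (r : Polynomial ℝ) :
    ∀ k, k ≤ n → PI (r * BMQ n)
      = (-1 : ℝ) ^ k * PI (derivative^[k] r * derivative^[n - k] (BMu n)) := by
  intro k
  induction k with
  | zero => intro _; simp [BMQ]
  | succ k ih =>
    intro hk
    rw [ih (Nat.le_of_succ_le hk)]
    have hsplit : n - k = (n - (k + 1)) + 1 := by omega
    have : derivative^[n - k] (BMu n) = derivative (derivative^[n - (k+1)] (BMu n)) := by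
      rw [BM_dIter, ← hsplit]
    rw [this, PI_ibp]
    rw [BM_vanish_one (by omega : n - (k+1) < n), BM_vanish_negone (by omega : n - (k+1) < n)]
    rw [BM_dIter]
    ring_nf


lemma BM_orth_low {n : ℕ} {r : Polynomial ℝ} (h : r.natDegree < n) : PI (r * BMQ n) = 0 := by
  rw [BM_iter_parts n r n le_rfl, iterate_derivative_eq_zero h]
  simp [PI]

lemma BM_natDegree_Q (n : ℕ) : (BMQ n).natDegree ≤ n := by
  have h1 : (BMu n).natDegree ≤ 2 * n := by
    apply le_trans (natDegree_pow_le)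
    have : (X ^ 2 - 1 : Polynomial ℝ).natDegree ≤ 2 :=
      le_trans (natDegree_sub_le _ _) (by simp)
    calc n * (X ^ 2 - 1 : Polynomial ℝ).natDegree ≤ n * 2 := by
          exact Nat.mul_le_mul_left n this
      _ = 2 * n := by omega
  calc (BMQ n).natDegree ≤ (BMu n).natDegree - n := natDegree_iterate_derivative _ _
    _ ≤ 2 * n - n := by omega
    _ = n := by omega


lemma PI_sub (r s : Polynomial ℝ) : PI (r - s) = PI r - PI s := by
  simp only [PI, eval_sub]
  exact integral_sub (pII r) (pII s)

/-- the beta-type integral -/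
def BMIn (n : ℕ) : ℝ := PI ((1 - X ^ 2) ^ n)

lemma BMIn_zero : BMIn 0 = 2 := by
  simp [BMIn, PI]
  norm_num

lemma BM_d1X2 : derivative (1 - X ^ 2 : Polynomial ℝ) = -(2 * X) := by
  simp [derivative_X_pow, map_ofNat]
  norm_num

lemma BMIn_rec (n : ℕ) :
    (2 * (n : ℝ) + 3) * BMIn (n + 1) = (2 * (n : ℝ) + 2) * BMIn n := by
  have hibp := PI_ibp X ((1 - X ^ 2) ^ (n + 1))
  rw [derivative_X] at hibp
  have hg1 : ((1 - X ^ 2 : Polynomial ℝ) ^ (n + 1)).eval 1 = 0 := by simp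
  have hgm1 : ((1 - X ^ 2 : Polynomial ℝ) ^ (n + 1)).eval (-1) = 0 := by simp
  have hone : PI (1 * (1 - X ^ 2) ^ (n + 1)) = BMIn (n + 1) := by rw [one_mul]; rfl
  rw [hg1, hgm1, hone, mul_zero, mul_zero] at hibp
  have hXd : X * derivative ((1 - X ^ 2 : Polynomial ℝ) ^ (n + 1))
      = C (-(2 * (n : ℝ) + 2)) * ((1 - X ^ 2) ^ n - (1 - X ^ 2) ^ (n + 1)) := by
    rw [derivative_pow, BM_d1X2]
    simp only [C_neg, C_add, C_mul, map_ofNat, C_eq_natCast, C_1]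
    push_cast
    ring
  rw [hXd, PI_smul, PI_sub] at hibp
  rw [show PI ((1 - X ^ 2) ^ n) = BMIn n from rfl,
    show PI ((1 - X ^ 2) ^ (n + 1)) = BMIn (n + 1) from rfl] at hibp
  linear_combination hibp

lemma BMIn_formula (n : ℕ) :
    ((2 * n + 1).factorial : ℝ) * BMIn n = 2 ^ (2 * n + 1) * (n.factorial : ℝ) ^ 2 := by
  induction n with
  | zero => simp [BMIn_zero]
  | succ m ih =>
    have hrec := BMIn_rec m
    rw [Nat.factorial_succ] at ih
    push_cast at ih
    rw [show 2 * (m + 1) + 1 = (2 * m + 1) + 1 + 1 by ring, Nat.factorial_succ,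
      Nat.factorial_succ, Nat.factorial_succ, Nat.factorial_succ]
    push_cast
    linear_combination ((2 * (m:ℝ) + 2) * (2 * (m:ℝ) + 1) * ((2 * m).factorial : ℝ)) * hrec
      + ((2 * (m:ℝ) + 2)) ^ 2 * ih

lemma BMIn_pos (n : ℕ) : 0 < BMIn n := by
  have h := BMIn_formula n
  have hf : (0:ℝ) < ((2 * n + 1).factorial : ℝ) := by
    exact_mod_cast Nat.factorial_pos _
  have hr : (0:ℝ) < 2 ^ (2 * n + 1) * (n.factorial : ℝ) ^ 2 := by
    have : (0:ℝ) < (n.factorial : ℝ) := by exact_mod_cast Nat.factorial_pos _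
    positivity
  nlinarith [h, hf, hr]

lemma BM_PI_Xn (n : ℕ) : PI (X ^ n * BMQ n) = (n.factorial : ℝ) * BMIn n := by
  rw [BM_iter_parts n (X ^ n) n le_rfl, Nat.sub_self, Function.iterate_zero_apply]
  rw [iterate_derivative_X_pow_eq_C_mul, Nat.sub_self, pow_zero, mul_one,
    Nat.descFactorial_self]
  have hu : (BMu n : Polynomial ℝ) = C ((-1:ℝ)^n) * (1 - X ^ 2) ^ n := by
    have h1 : (X ^ 2 - 1 : Polynomial ℝ) = (C (-1:ℝ)) * (1 - X ^ 2) := by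
      rw [C_neg, C_1]; ring
    rw [BMu, h1, mul_pow, ← C_pow]
  rw [hu, ← mul_assoc, ← C_mul, PI_smul]
  rw [show PI ((1 - X ^ 2) ^ n) = BMIn n from rfl]
  rw [← mul_assoc]
  rw [show ((-1:ℝ)^n * ((n.factorial : ℝ) * (-1:ℝ)^n)) = (n.factorial : ℝ) * ((-1:ℝ)^n)^2 by
    ring]
  rw [← pow_mul, mul_comm n 2, pow_mul]
  norm_num

lemma BM_coeff_Q (n : ℕ) : (BMQ n).coeff n = ((2 * n).descFactorial n : ℝ) := by
  have h := coeff_iterate_derivative (k := n) (BMu n) n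
  have hm : (BMu n).coeff (n + n) = 1 := by
    have hmonic : (BMu n).Monic := by
      apply Polynomial.Monic.pow
      have : (X ^ 2 - 1 : Polynomial ℝ) = X ^ 2 - C 1 := by rw [C_1]
      rw [this]
      exact monic_X_pow_sub_C 1 (by norm_num)
    have hdeg : (BMu n).natDegree = 2 * n := by
      rw [BMu]
      have : (X ^ 2 - 1 : Polynomial ℝ) = X ^ 2 - C 1 := by rw [C_1]
      rw [this, natDegree_pow, natDegree_X_pow_sub_C]
      ring
    have := hmonic.coeff_natDegree
    rw [hdeg] at this
    rw [show n + n = 2 * n by ring]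
    exact this
  rw [BMQ, h, hm, show n + n = 2 * n by ring]
  simp

lemma BM_N (n : ℕ) : PI (BMQ n * BMQ n) = (((2 * n).factorial : ℝ)) * BMIn n := by
  set a : ℝ := ((2 * n).descFactorial n : ℝ) with ha
  set r : Polynomial ℝ := BMQ n - C a * X ^ n with hr
  have hdecomp : BMQ n = C a * X ^ n + r := by rw [hr]; ring
  have hrQ : PI (r * BMQ n) = 0 := by
    rcases eq_or_ne r 0 with h0 | h0
    · rw [h0, zero_mul]
      simp [PI]
    · apply BM_orth_low
      have hcoeff : r.coeff n = 0 := by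
        rw [hr]
        simp [BM_coeff_Q n, ha]
      have hle : r.natDegree ≤ n := by
        rw [hr]
        apply le_trans (natDegree_sub_le _ _)
        have h2 : (C a * X ^ n : Polynomial ℝ).natDegree ≤ n :=
          le_trans (natDegree_C_mul_le _ _) (by rw [natDegree_X_pow])
        exact max_le (BM_natDegree_Q n) h2
      rcases lt_or_eq_of_le hle with h | h
      · exact h
      · exfalso
        have := leadingCoeff_ne_zero.mpr h0
        rw [leadingCoeff, h] at this
        exact this hcoeff
  have hfac : (n.factorial : ℝ) * a = ((2 * n).factorial : ℝ) := by
    have hnat : (2 * n - n).factorial * ((2 * n).descFactorial n) = (2 * n).factorial :=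
      Nat.factorial_mul_descFactorial (by omega)
    rw [show 2 * n - n = n by omega] at hnat
    rw [ha]
    exact_mod_cast hnat
  calc PI (BMQ n * BMQ n) = PI ((C a * X ^ n + r) * BMQ n) := by rw [← hdecomp]
    _ = PI (C a * (X ^ n * BMQ n)) + PI (r * BMQ n) := by
        rw [← PI_add]; congr 1; ring
    _ = a * ((n.factorial : ℝ) * BMIn n) := by rw [PI_smul, BM_PI_Xn, hrQ, add_zero]
    _ = (((2 * n).factorial : ℝ)) * BMIn n := by linear_combination (BMIn n) * hfac

lemma BM_weighted (m n : ℕ) :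
    PI (((1 - X ^ 2) * derivative (BMQ m)) * derivative (BMQ n))
      = ((m * (m + 1) : ℕ) : ℝ) * PI (BMQ m * BMQ n) := by
  have hibp := PI_ibp ((1 - X ^ 2) * derivative (BMQ m)) (BMQ n)
  have h1 : (((1 - X ^ 2) * derivative (BMQ m)) : Polynomial ℝ).eval 1 = 0 := by simp
  have hm1 : (((1 - X ^ 2) * derivative (BMQ m)) : Polynomial ℝ).eval (-1) = 0 := by
    simp
  rw [h1, hm1] at hibp
  have hDf : derivative ((1 - X ^ 2) * derivative (BMQ m))
      = C (-((m * (m + 1) : ℕ) : ℝ)) * BMQ m := by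
    have : ((1 - X ^ 2) * derivative (BMQ m) : Polynomial ℝ)
        = -((X ^ 2 - 1) * derivative (BMQ m)) := by ring
    rw [this, derivative_neg, BM_ode m, C_neg, C_eq_natCast]
    ring
  rw [hDf] at hibp
  rw [show (C (-((m * (m + 1) : ℕ) : ℝ)) * BMQ m) * BMQ n
      = C (-((m * (m + 1) : ℕ) : ℝ)) * (BMQ m * BMQ n) by ring, PI_smul] at hibp
  rw [hibp]
  ring

lemma BM_G (n : ℕ) : PI (derivative (BMQ n) * derivative (BMQ n))
    = ((n * (n + 1) : ℕ) : ℝ) * ((n.factorial : ℝ) * 2 ^ n) ^ 2 := by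
  cases n with
  | zero =>
    have h0 : derivative (BMQ 0) = 0 := by simp [BMQ, BMu]
    rw [h0, zero_mul]
    simp [PI]
  | succ m =>
    have hibp := PI_ibp (derivative (BMQ (m+1))) (BMQ (m+1))
    have horth : PI (derivative (derivative (BMQ (m+1))) * BMQ (m+1)) = 0 := by
      apply BM_orth_low
      have h1 := natDegree_derivative_le (derivative (BMQ (m+1)))
      have h2 := natDegree_derivative_le (BMQ (m+1))
      have h3 := BM_natDegree_Q (m+1)
      omega
    rw [horth, sub_zero] at hibp
    have h1 := BM_dQ_eval_one (m+1)
    have h2 := BM_dQ_eval_negone (m+1)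
    have q1 := BM_Q_eval_one (m+1)
    have q2 := BM_Q_eval_negone (m+1)
    rw [hibp]
    rcases Nat.even_or_odd (m+1) with he | ho
    · rw [he.neg_pow] at q2
      push_cast at h1 h2 ⊢
      linear_combination (eval 1 (BMQ (m+1)) / 2) * h1 + (eval (-1) (BMQ (m+1)) / 2) * h2
        + ((((m:ℝ)+1) * ((m:ℝ)+2)) / 2)
            * (eval 1 (BMQ (m+1)) + ((m+1).factorial : ℝ) * 2 ^ (m+1)) * q1
        + ((((m:ℝ)+1) * ((m:ℝ)+2)) / 2)
            * (eval (-1) (BMQ (m+1)) + ((m+1).factorial : ℝ) * 2 ^ (m+1)) * q2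
    · rw [ho.neg_pow] at q2
      push_cast at h1 h2 ⊢
      linear_combination (eval 1 (BMQ (m+1)) / 2) * h1 + (eval (-1) (BMQ (m+1)) / 2) * h2
        + ((((m:ℝ)+1) * ((m:ℝ)+2)) / 2)
            * (eval 1 (BMQ (m+1)) + ((m+1).factorial : ℝ) * 2 ^ (m+1)) * q1
        + ((((m:ℝ)+1) * ((m:ℝ)+2)) / 2)
            * (eval (-1) (BMQ (m+1)) - ((m+1).factorial : ℝ) * 2 ^ (m+1)) * q2

/-- the basis polynomials -/
def BMphi (k : ℕ) : Polynomial ℝ := derivative (BMQ (k + 1))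

lemma BM_natDegree_phi (k : ℕ) : (BMphi k).natDegree ≤ k := by
  have h1 := natDegree_derivative_le (BMQ (k+1))
  have h2 := BM_natDegree_Q (k+1)
  have : (BMphi k).natDegree ≤ (BMQ (k+1)).natDegree - 1 := h1
  omega

lemma BM_coeff_phi (k : ℕ) :
    (BMphi k).coeff k = ((2 * (k+1)).descFactorial (k+1) : ℝ) * ((k : ℝ) + 1) := by
  rw [BMphi, coeff_derivative, BM_coeff_Q (k+1)]

lemma BM_coeff_phi_ne (k : ℕ) : (BMphi k).coeff k ≠ 0 := by
  rw [BM_coeff_phi]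
  have h1 : 0 < (2 * (k+1)).descFactorial (k+1) := by
    rcases Nat.eq_zero_or_pos ((2 * (k+1)).descFactorial (k+1)) with h | h
    · exfalso
      have := Nat.descFactorial_eq_zero_iff_lt.mp h
      omega
    · exact h
  have h2 : (0:ℝ) < ((2 * (k+1)).descFactorial (k+1) : ℝ) := by exact_mod_cast h1
  positivity

/-- degree-drop step -/
lemma BM_deg_drop (d : ℕ) (q : Polynomial ℝ) (hq : q.natDegree ≤ d + 1) :
    (q - C (q.coeff (d+1) / (BMphi (d+1)).coeff (d+1)) * BMphi (d+1)).natDegree ≤ d := by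
  set t : ℝ := q.coeff (d+1) / (BMphi (d+1)).coeff (d+1) with ht
  set r : Polynomial ℝ := q - C t * BMphi (d+1) with hrdef
  have hrc : r.coeff (d+1) = 0 := by
    rw [hrdef]
    simp only [coeff_sub, coeff_C_mul]
    rw [ht, div_mul_cancel₀ _ (BM_coeff_phi_ne (d+1))]
    ring
  have hrle : r.natDegree ≤ d + 1 := by
    rw [hrdef]
    apply le_trans (natDegree_sub_le _ _)
    have h2 : (C t * BMphi (d+1) : Polynomial ℝ).natDegree ≤ d + 1 :=
      le_trans (natDegree_C_mul_le _ _) (BM_natDegree_phi (d+1))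
    exact max_le hq h2
  rw [natDegree_le_iff_coeff_eq_zero]
  intro m hm
  rcases eq_or_lt_of_le (Nat.succ_le_of_lt hm) with h | h
  · rw [← h]; exact hrc
  · exact coeff_eq_zero_of_natDegree_lt (lt_of_le_of_lt hrle h)

lemma BMphi_zero : BMphi 0 = C 2 := by
  have h1 : BMQ 1 = 2 * X := by
    rw [BMQ, BMu]
    simp only [pow_one, Function.iterate_one]
    rw [BM_dX2]
  rw [BMphi, h1, map_ofNat]
  simp

/-- expansion in the basis -/
lemma BM_span : ∀ (d : ℕ) (q : Polynomial ℝ), q.natDegree ≤ d →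
    ∃ c : ℕ → ℝ, q = ∑ k ∈ Finset.range (d+1), C (c k) * BMphi k := by
  intro d
  induction d with
  | zero =>
    intro q hq
    refine ⟨fun _ => q.coeff 0 / 2, ?_⟩
    rw [Finset.sum_range_one, BMphi_zero, ← C_mul, div_mul_cancel₀ _ (by norm_num : (2:ℝ) ≠ 0)]
    exact eq_C_of_natDegree_le_zero hq
  | succ d ih =>
    intro q hq
    set t : ℝ := q.coeff (d+1) / (BMphi (d+1)).coeff (d+1) with ht
    obtain ⟨c, hc⟩ := ih (q - C t * BMphi (d+1)) (BM_deg_drop d q hq)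
    refine ⟨fun k => if k = d + 1 then t else c k, ?_⟩
    rw [Finset.sum_range_succ]
    have hsum : ∑ k ∈ Finset.range (d+1), C (if k = d + 1 then t else c k) * BMphi k
        = ∑ k ∈ Finset.range (d+1), C (c k) * BMphi k := by
      apply Finset.sum_congr rfl
      intro k hk
      have hk' : k < d + 1 := Finset.mem_range.mp hk
      rw [if_neg (by omega : k ≠ d + 1)]
    rw [hsum]
    simp only [if_true]
    rw [← hc]
    ring

/-- Cauchy-Schwarz for PI -/
lemma BM_CS (f g : Polynomial ℝ) : (PI (f * g)) ^ 2 ≤ PI (f * f) * PI (g * g) := by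
  have key : ∀ t : ℝ, 0 ≤ PI (f * f) * (t * t) + (2 * PI (f * g)) * t + PI (g * g) := by
    intro t
    have hexp : (C t * f + g) * (C t * f + g)
        = C (t * t) * (f * f) + (C (2 * t) * (f * g) + g * g) := by
      simp only [C_mul, C_add, map_ofNat]
      ring
    have h0 := PI_sq_nonneg (C t * f + g)
    rw [hexp, PI_add, PI_add, PI_smul, PI_smul] at h0
    have heq : PI (f * f) * (t * t) + (2 * PI (f * g)) * t + PI (g * g)
        = t * t * PI (f * f) + (2 * t * PI (f * g) + PI (g * g)) := by ring
    rw [heq]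
    exact h0
  have hd := discrim_le_zero key
  rw [discrim] at hd
  nlinarith [hd]

lemma BM_H (k : ℕ) : PI (((1 - X ^ 2) * BMphi k) * BMphi k)
    = (((k+1) * (k+2) : ℕ) : ℝ) * (((2 * (k+1)).factorial : ℝ) * BMIn (k+1)) := by
  have hphi : BMphi k = derivative (BMQ (k+1)) := rfl
  rw [hphi, BM_weighted (k+1) (k+1), BM_N (k+1)]

lemma BM_H_pos (k : ℕ) : 0 < PI (((1 - X ^ 2) * BMphi k) * BMphi k) := by
  rw [BM_H]
  have h1 : (0:ℝ) < (((k+1) * (k+2) : ℕ) : ℝ) := by positivity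
  have h2 : (0:ℝ) < ((2 * (k+1)).factorial : ℝ) := by exact_mod_cast Nat.factorial_pos _
  exact mul_pos h1 (mul_pos h2 (BMIn_pos (k+1)))

lemma BM_ratio (k : ℕ) : PI (BMphi k * BMphi k)
    = ((2 * (k:ℝ) + 3) / 2) * PI (((1 - X ^ 2) * BMphi k) * BMphi k) := by
  rw [BM_H k]
  have hphi : BMphi k = derivative (BMQ (k+1)) := rfl
  rw [hphi, BM_G (k+1)]
  have hf := BMIn_formula (k+1)
  rw [Nat.factorial_succ] at hf
  rw [show 2 * (k+1) + 1 = (k+1) + (k+1) + 1 by ring, pow_add, pow_add] at hf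
  push_cast at hf ⊢
  linear_combination (-(((k:ℝ)+1) * ((k:ℝ)+2) / 2)) * hf

lemma BM_sum_eq (n : ℕ) : ∑ k ∈ Finset.range n, (2 * (k:ℝ) + 3) = (n:ℝ) ^ 2 + 2 * n := by
  induction n with
  | zero => simp
  | succ m ih =>
    rw [Finset.sum_range_succ, ih]
    push_cast
    ring

theorem weighted_inverse_inequality_bernardi_maday :
    ∃ C : ℝ, 0 < C ∧ ∀ p : ℕ, 1 ≤ p → ∀ q : Polynomial ℝ, q.natDegree ≤ p →
      ∫ x in (-1 : ℝ)..1, (q.eval x) ^ 2 ≤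
        C * (p : ℝ) ^ 2 * ∫ x in (-1 : ℝ)..1, (q.eval x) ^ 2 * (1 - x ^ 2) := by
  refine ⟨4, by norm_num, ?_⟩
  intro p hp q hq
  obtain ⟨c, hc⟩ := BM_span p q hq
  have hIeq : (∫ x in (-1:ℝ)..1, (q.eval x) ^ 2) = PI (q * q) := by
    have h : ∀ x : ℝ, (q.eval x) ^ 2 = (q * q).eval x := by
      intro x; rw [eval_mul]; ring
    simp only [h, PI]
  have hJeq : (∫ x in (-1:ℝ)..1, (q.eval x) ^ 2 * (1 - x ^ 2))
      = PI ((1 - X ^ 2) * (q * q)) := by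
    have h : ∀ x : ℝ, (q.eval x) ^ 2 * (1 - x ^ 2) = ((1 - X ^ 2) * (q * q)).eval x := by
      intro x
      simp only [eval_mul, eval_sub, eval_pow, eval_one, eval_X]
      ring
    simp only [h, PI]
  rw [hIeq, hJeq]
  -- expansion of q*q
  have hqq : q * q = ∑ j ∈ Finset.range (p+1), ∑ k ∈ Finset.range (p+1),
      C (c j * c k) * (BMphi j * BMphi k) := by
    rw [hc, Finset.sum_mul_sum]
    apply Finset.sum_congr rfl; intro j _
    apply Finset.sum_congr rfl; intro k _
    rw [C_mul]; ring
  have hI2 : PI (q * q) = ∑ j ∈ Finset.range (p+1), ∑ k ∈ Finset.range (p+1),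
      (c j * c k) * PI (BMphi j * BMphi k) := by
    rw [hqq, PI_sum]
    apply Finset.sum_congr rfl; intro j _
    rw [PI_sum]
    apply Finset.sum_congr rfl; intro k _
    rw [PI_smul]
  -- expansion of weighted integral and diagonality
  have hW0 : ∀ j k : ℕ, j ≠ k → PI (((1 - X ^ 2) * BMphi j) * BMphi k) = 0 := by
    intro j k hjk
    have hphij : BMphi j = derivative (BMQ (j+1)) := rfl
    have hphik : BMphi k = derivative (BMQ (k+1)) := rfl
    rw [hphij, hphik, BM_weighted (j+1) (k+1)]
    rcases lt_or_gt_of_ne hjk with h | h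
    · rw [BM_orth_low (lt_of_le_of_lt (BM_natDegree_Q (j+1)) (by omega))]
      ring
    · rw [mul_comm (BMQ (j+1)) (BMQ (k+1)),
        BM_orth_low (lt_of_le_of_lt (BM_natDegree_Q (k+1)) (by omega))]
      ring
  have hJ2 : PI ((1 - X ^ 2) * (q * q)) = ∑ k ∈ Finset.range (p+1),
      (c k) ^ 2 * PI (((1 - X ^ 2) * BMphi k) * BMphi k) := by
    have hJqq : (1 - X ^ 2) * (q * q) = ∑ j ∈ Finset.range (p+1), ∑ k ∈ Finset.range (p+1),
        C (c j * c k) * (((1 - X ^ 2) * BMphi j) * BMphi k) := by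
      rw [hqq, Finset.mul_sum]
      apply Finset.sum_congr rfl; intro j _
      rw [Finset.mul_sum]
      apply Finset.sum_congr rfl; intro k _
      ring
    rw [hJqq, PI_sum]
    apply Finset.sum_congr rfl; intro j hj
    rw [PI_sum, Finset.sum_eq_single_of_mem j hj]
    · rw [PI_smul]; ring
    · intro k _ hkj
      rw [PI_smul, hW0 j k (Ne.symm hkj), mul_zero]
  rw [hJ2]
  -- term-wise Cauchy-Schwarz bound
  have hterm : ∀ j k : ℕ, (c j * c k) * PI (BMphi j * BMphi k)
      ≤ (|c j| * Real.sqrt (PI (BMphi j * BMphi j)))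
        * (|c k| * Real.sqrt (PI (BMphi k * BMphi k))) := by
    intro j k
    have hcs := BM_CS (BMphi j) (BMphi k)
    have habs : |PI (BMphi j * BMphi k)|
        ≤ Real.sqrt (PI (BMphi j * BMphi j)) * Real.sqrt (PI (BMphi k * BMphi k)) := by
      rw [← Real.sqrt_sq_eq_abs, ← Real.sqrt_mul (PI_sq_nonneg _)]
      exact Real.sqrt_le_sqrt hcs
    calc (c j * c k) * PI (BMphi j * BMphi k)
        ≤ |(c j * c k) * PI (BMphi j * BMphi k)| := le_abs_self _
      _ = (|c j| * |c k|) * |PI (BMphi j * BMphi k)| := by rw [abs_mul, abs_mul]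
      _ ≤ (|c j| * |c k|) * (Real.sqrt (PI (BMphi j * BMphi j))
            * Real.sqrt (PI (BMphi k * BMphi k))) := by
          apply mul_le_mul_of_nonneg_left habs (by positivity)
      _ = _ := by ring
  -- sum the bound
  have hIle : PI (q * q) ≤ (∑ k ∈ Finset.range (p+1),
      |c k| * Real.sqrt (PI (BMphi k * BMphi k))) ^ 2 := by
    rw [hI2, sq, Finset.sum_mul_sum]
    apply Finset.sum_le_sum
    intro j _
    apply Finset.sum_le_sum
    intro k _
    exact hterm j k
  -- Cauchy-Schwarz on the finite sum
  have hsplit : ∀ k : ℕ, |c k| * Real.sqrt (PI (BMphi k * BMphi k))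
      = (|c k| * Real.sqrt (PI (((1 - X ^ 2) * BMphi k) * BMphi k)))
        * Real.sqrt ((2 * (k:ℝ) + 3) / 2) := by
    intro k
    rw [BM_ratio k, Real.sqrt_mul (by positivity)]
    ring
  have hCS2 : (∑ k ∈ Finset.range (p+1), |c k| * Real.sqrt (PI (BMphi k * BMphi k))) ^ 2
      ≤ (∑ k ∈ Finset.range (p+1), (c k) ^ 2 * PI (((1 - X ^ 2) * BMphi k) * BMphi k))
        * (∑ k ∈ Finset.range (p+1), (2 * (k:ℝ) + 3) / 2) := by
    have h1 := Finset.sum_mul_sq_le_sq_mul_sq (Finset.range (p+1))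
      (fun k => |c k| * Real.sqrt (PI (((1 - X ^ 2) * BMphi k) * BMphi k)))
      (fun k => Real.sqrt ((2 * (k:ℝ) + 3) / 2))
    have h2 : ∀ k : ℕ, (|c k| * Real.sqrt (PI (((1 - X ^ 2) * BMphi k) * BMphi k))) ^ 2
        = (c k) ^ 2 * PI (((1 - X ^ 2) * BMphi k) * BMphi k) := by
      intro k
      rw [mul_pow, sq_abs, Real.sq_sqrt (BM_H_pos k).le]
    have h3 : ∀ k : ℕ, (Real.sqrt ((2 * (k:ℝ) + 3) / 2)) ^ 2 = (2 * (k:ℝ) + 3) / 2 := by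
      intro k
      rw [Real.sq_sqrt (by positivity)]
    calc (∑ k ∈ Finset.range (p+1), |c k| * Real.sqrt (PI (BMphi k * BMphi k))) ^ 2
        = (∑ k ∈ Finset.range (p+1),
            (|c k| * Real.sqrt (PI (((1 - X ^ 2) * BMphi k) * BMphi k)))
              * Real.sqrt ((2 * (k:ℝ) + 3) / 2)) ^ 2 := by
          congr 1
          exact Finset.sum_congr rfl fun k _ => hsplit k
      _ ≤ (∑ k ∈ Finset.range (p+1),
            (|c k| * Real.sqrt (PI (((1 - X ^ 2) * BMphi k) * BMphi k))) ^ 2)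
          * (∑ k ∈ Finset.range (p+1), (Real.sqrt ((2 * (k:ℝ) + 3) / 2)) ^ 2) := h1
      _ = _ := by
          congr 1
          · exact Finset.sum_congr rfl fun k _ => h2 k
          · exact Finset.sum_congr rfl fun k _ => h3 k
  -- bound the scalar sum
  have hsum : (∑ k ∈ Finset.range (p+1), (2 * (k:ℝ) + 3) / 2) ≤ 4 * (p:ℝ) ^ 2 := by
    rw [← Finset.sum_div, BM_sum_eq (p+1)]
    have hp1 : (1:ℝ) ≤ (p:ℝ) := by exact_mod_cast hp
    push_cast
    nlinarith [hp1]
  have hJnn : 0 ≤ ∑ k ∈ Finset.range (p+1),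
      (c k) ^ 2 * PI (((1 - X ^ 2) * BMphi k) * BMphi k) := by
    apply Finset.sum_nonneg
    intro k _
    exact mul_nonneg (sq_nonneg _) (BM_H_pos k).le
  calc PI (q * q)
      ≤ (∑ k ∈ Finset.range (p+1), |c k| * Real.sqrt (PI (BMphi k * BMphi k))) ^ 2 := hIle
    _ ≤ (∑ k ∈ Finset.range (p+1), (c k) ^ 2 * PI (((1 - X ^ 2) * BMphi k) * BMphi k))
        * (∑ k ∈ Finset.range (p+1), (2 * (k:ℝ) + 3) / 2) := hCS2
    _ ≤ (∑ k ∈ Finset.range (p+1), (c k) ^ 2 * PI (((1 - X ^ 2) * BMphi k) * BMphi k))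
        * (4 * (p:ℝ) ^ 2) := by
          exact mul_le_mul_of_nonneg_left hsum hJnn
    _ = 4 * (p:ℝ) ^ 2 * ∑ k ∈ Finset.range (p+1),
        (c k) ^ 2 * PI (((1 - X ^ 2) * BMphi k) * BMphi k) := by ring

end BM2
end

section
/- Inverse inequality for bubble-multiplied polynomials (Bank et al.): There exists a constant C > 0 such that for every integer p ≥ 1 and every real polynomial q of degree at most p, the function g(x) := q(x)·(1 − x²) satisfies ∫_{−1}^{1} g'(x)² dx ≤ C · p² · ∫_{−1}^{1} q(x)² · (1 − x²) dx. -/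
open Polynomial Finset intervalIntegral

namespace BubbleInv


noncomputable def P (n : ℕ) : Polynomial ℝ := derivative^[n] ((X ^ 2 - 1) ^ n)
noncomputable def Q (n : ℕ) : Polynomial ℝ := derivative^[n + 2] ((X ^ 2 - 1) ^ (n + 1))
noncomputable def I (m n : ℕ) : ℝ := ∫ x in (-1 : ℝ)..1, (P m).eval x * (P n).eval x
noncomputable def μ (n : ℕ) : ℝ := ((n : ℝ) + 1) * ((n : ℝ) + 2)

lemma Q_eq (n : ℕ) : Q n = derivative (P (n + 1)) := by
  rw [Q, P, ← Function.iterate_succ_apply' derivative]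

lemma dcomm (j : ℕ) (h : Polynomial ℝ) :
    derivative^[j] (derivative h) = derivative (derivative^[j] h) := by
  rw [← Function.iterate_succ_apply, Function.iterate_succ_apply']

lemma leibX (g : Polynomial ℝ) : ∀ m : ℕ,
    derivative^[m + 1] (X * g) =
      X * derivative^[m + 1] g + C ((m : ℝ) + 1) * derivative^[m] g := by
  intro m
  induction m with
  | zero => simp [derivative_mul]; ring
  | succ k ih =>
    rw [Function.iterate_succ_apply' derivative (k+1), ih]
    rw [Function.iterate_succ_apply' derivative (k+1), Function.iterate_succ_apply' derivative k]
    simp [derivative_mul, dcomm, map_ofNat]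
    push_cast
    ring

lemma leib2 (g : Polynomial ℝ) : ∀ m : ℕ,
    derivative^[m + 2] ((X ^ 2 - 1) * g) =
      (X ^ 2 - 1) * derivative^[m + 2] g
        + C (2 * (m : ℝ) + 4) * (X * derivative^[m + 1] g)
        + C (((m : ℝ) + 2) * ((m : ℝ) + 1)) * derivative^[m] g := by
  intro m
  induction m with
  | zero =>
    show derivative (derivative _) = _
    simp [derivative_mul, map_ofNat]
    ring
  | succ k ih =>
    rw [Function.iterate_succ_apply' derivative (k+2), ih]
    rw [Function.iterate_succ_apply' derivative (k+2), Function.iterate_succ_apply' derivative (k+1)]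
    simp [derivative_mul, dcomm, map_ofNat]
    push_cast
    ring

lemma base (n : ℕ) :
    (X ^ 2 - 1 : Polynomial ℝ) * derivative ((X ^ 2 - 1) ^ n)
      = C (2 * (n : ℝ)) * (X * (X ^ 2 - 1) ^ n) := by
  cases n with
  | zero => simp
  | succ k =>
    rw [derivative_pow]
    have h : ((X:Polynomial ℝ) ^ 2 - 1) * ((X ^ 2 - 1) ^ (k + 1 - 1)) = (X ^ 2 - 1) ^ (k + 1) := by
      rw [Nat.add_sub_cancel, ← pow_succ']
    simp only [derivative_sub, derivative_one, derivative_X_pow, Nat.add_sub_cancel]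
    rw [← h]
    push_cast [Polynomial.C_add, Polynomial.C_mul, Polynomial.C_1]
    ring


lemma ode (n : ℕ) :
    derivative ((X ^ 2 - 1) * derivative (P n)) = C ((n : ℝ) * ((n : ℝ) + 1)) * P n := by
  cases n with
  | zero => simp [P]
  | succ k =>
    have e1 := leib2 (derivative ((X ^ 2 - 1) ^ (k + 1))) k
    have e2 := congrArg (derivative^[k + 2]) (base (k + 1))
    rw [Polynomial.iterate_derivative_C_mul, leibX _ (k + 1)] at e2
    simp only [← Function.iterate_succ_apply derivative] at e1
    have hP1 : P (k + 1) = derivative^[k + 1] ((X ^ 2 - 1) ^ (k + 1)) := rfl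
    rw [hP1, ← Function.iterate_succ_apply' derivative]
    rw [show ((X:Polynomial ℝ) ^ 2 - 1) * derivative^[k + 1 + 1] ((X ^ 2 - 1) ^ (k + 1))
        = (X ^ 2 - 1) * derivative^[k + 2] ((X ^ 2 - 1) ^ (k + 1)) from rfl]
    simp only [derivative_mul, derivative_sub, derivative_one, derivative_X_pow,
      ← Function.iterate_succ_apply' derivative]
    push_cast at e1 e2 ⊢
    simp only [map_add, map_mul, map_ofNat, map_natCast, map_one] at e1 e2 ⊢
    simp only [Nat.succ_eq_add_one, show k+1+1 = k+2 from rfl, show k+2+1 = k+3 from rfl] at e1 e2 ⊢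
    linear_combination e2 - e1

lemma bubble_monic (n : ℕ) : ((X ^ 2 - 1 : Polynomial ℝ) ^ (n + 1)).Monic := by
  have h : ((X : Polynomial ℝ) ^ 2 - 1) = X ^ 2 - C 1 := by rw [map_one]
  exact ((h ▸ monic_X_pow_sub_C (1 : ℝ) two_ne_zero) : (X ^ 2 - 1 : Polynomial ℝ).Monic).pow _

lemma bubble_natDegree (n : ℕ) : ((X ^ 2 - 1 : Polynomial ℝ) ^ (n + 1)).natDegree = 2 * n + 2 := by
  have h : ((X : Polynomial ℝ) ^ 2 - 1) = X ^ 2 - C 1 := by rw [map_one]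
  rw [natDegree_pow, h, natDegree_X_pow_sub_C]; ring

lemma Q_coeff (n : ℕ) : (Q n).coeff n = ((2 * n + 2).descFactorial (n + 2) : ℝ) := by
  rw [Q, Polynomial.coeff_iterate_derivative]
  have h : n + (n + 2) = 2 * n + 2 := by ring
  rw [h]
  have h2 : ((X ^ 2 - 1 : Polynomial ℝ) ^ (n + 1)).coeff (2 * n + 2) = 1 := by
    have := (bubble_monic n).coeff_natDegree
    rwa [bubble_natDegree n] at this
  rw [h2, nsmul_eq_mul, mul_one]

lemma Q_coeff_ne (n : ℕ) : (Q n).coeff n ≠ 0 := by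
  rw [Q_coeff]
  have : (2 * n + 2).descFactorial (n + 2) ≠ 0 := by
    intro h
    have := Nat.descFactorial_eq_zero_iff_lt.mp h
    omega
  exact_mod_cast this

lemma Q_natDegree (n : ℕ) : (Q n).natDegree = n := by
  refine le_antisymm ?_ (le_natDegree_of_ne_zero (Q_coeff_ne n))
  have h := Polynomial.natDegree_iterate_derivative ((X ^ 2 - 1 : Polynomial ℝ) ^ (n + 1)) (n + 2)
  rw [bubble_natDegree n, show 2 * n + 2 - (n + 2) = n by omega] at h
  exact h

lemma span (p : ℕ) : ∀ q : Polynomial ℝ, q.natDegree ≤ p →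
    ∃ a : ℕ → ℝ, q = ∑ n ∈ range (p + 1), C (a n) * Q n := by
  induction p with
  | zero =>
    intro q hq
    refine ⟨fun _ => q.coeff 0 / (Q 0).coeff 0, ?_⟩
    rw [Finset.sum_range_one]
    have h0 : Q 0 = C ((Q 0).coeff 0) :=
      Polynomial.eq_C_of_natDegree_le_zero (Q_natDegree 0).le
    show q = C (q.coeff 0 / (Q 0).coeff 0) * Q 0
    conv_lhs => rw [Polynomial.eq_C_of_natDegree_le_zero hq]
    conv_rhs => rw [h0]
    rw [← C_mul]
    simp only [Polynomial.coeff_C_zero]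
    rw [div_mul_cancel₀ _ (Q_coeff_ne 0)]
  | succ p ih =>
    intro q hq
    set t := q.coeff (p + 1) / (Q (p + 1)).coeff (p + 1) with ht
    have hdeg : (q - C t * Q (p + 1)).natDegree ≤ p := by
      refine Polynomial.natDegree_le_iff_coeff_eq_zero.mpr fun m hm => ?_
      rcases eq_or_lt_of_le (Nat.succ_le_of_lt hm) with h | h
      · rw [Polynomial.coeff_sub, Polynomial.coeff_C_mul, ← h, ht,
          div_mul_cancel₀ _ (Q_coeff_ne (p + 1)), sub_self]
      · rw [Polynomial.coeff_sub, Polynomial.coeff_C_mul,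
          Polynomial.coeff_eq_zero_of_natDegree_lt (lt_of_le_of_lt hq h),
          Polynomial.coeff_eq_zero_of_natDegree_lt (by rw [Q_natDegree]; exact h),
          mul_zero, sub_self]
    obtain ⟨a, ha⟩ := ih _ hdeg
    refine ⟨Function.update a (p + 1) t, ?_⟩
    rw [Finset.sum_range_succ, Function.update_self]
    have : ∑ n ∈ range (p + 1), C (Function.update a (p + 1) t n) * Q n
        = ∑ n ∈ range (p + 1), C (a n) * Q n := by
      refine Finset.sum_congr rfl fun n hn => ?_
      rw [Function.update_of_ne (by simp at hn; omega)]
    rw [this, ← ha]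
    ring

lemma pint (F : Polynomial ℝ) :
    IntervalIntegrable (fun x => F.eval x) MeasureTheory.volume (-1 : ℝ) 1 :=
  F.continuous.intervalIntegrable _ _

lemma ftc (F : Polynomial ℝ) :
    ∫ x in (-1 : ℝ)..1, (derivative F).eval x = F.eval 1 - F.eval (-1) := by
  refine integral_deriv_eq_sub' (fun x => F.eval x) (funext fun x => F.deriv) ?_ ?_
  · exact fun x _ => F.differentiable.differentiableAt
  · exact (derivative F).continuous.continuousOn


lemma I_nonneg (n : ℕ) : 0 ≤ I n n := by
  rw [I]
  apply intervalIntegral.integral_nonneg (by norm_num)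
  intro x _
  exact mul_self_nonneg _

lemma orth {m n : ℕ} (h : m ≠ n) : I m n = 0 := by
  set W : Polynomial ℝ :=
    (X ^ 2 - 1) * (derivative (P m) * P n - P m * derivative (P n)) with hW
  have hd : derivative W
      = C ((m : ℝ) * ((m : ℝ) + 1) - (n : ℝ) * ((n : ℝ) + 1)) * (P m * P n) := by
    have em := ode m
    have en := ode n
    rw [hW]
    simp only [derivative_mul, derivative_sub, derivative_one, derivative_X_pow] at *
    push_cast at *
    simp only [map_sub, map_mul, map_add, map_ofNat, map_natCast, map_one] at *
    linear_combination (P n : Polynomial ℝ) * em - (P m : Polynomial ℝ) * en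
  have hb : W.eval 1 = 0 ∧ W.eval (-1) = 0 := by
    constructor <;> · rw [hW]; simp
  have hint := ftc W
  rw [hd, hb.1, hb.2, sub_zero] at hint
  have : ∫ x in (-1:ℝ)..1, ((m : ℝ) * ((m : ℝ) + 1) - (n : ℝ) * ((n : ℝ) + 1))
      * ((P m).eval x * (P n).eval x) = 0 := by
    rw [← hint]
    congr 1
    ext x
    simp [mul_comm]
  rw [intervalIntegral.integral_const_mul] at this
  have hμ : ((m : ℝ) * ((m : ℝ) + 1) - (n : ℝ) * ((n : ℝ) + 1)) ≠ 0 := by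
    rcases Nat.lt_or_ge m n with hlt | hge
    · have : (m : ℝ) < n := by exact_mod_cast hlt
      nlinarith [Nat.cast_nonneg (α := ℝ) m, Nat.cast_nonneg (α := ℝ) n]
    · have hgt : n < m := lt_of_le_of_ne hge (Ne.symm h)
      have : (n : ℝ) < m := by exact_mod_cast hgt
      nlinarith [Nat.cast_nonneg (α := ℝ) m, Nat.cast_nonneg (α := ℝ) n]
  rw [I]
  exact (mul_eq_zero.mp this).resolve_left hμ

lemma key2 (m n : ℕ) :
    ∫ x in (-1 : ℝ)..1, (Q m).eval x * (Q n).eval x * (1 - x ^ 2)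
      = ((m : ℝ) + 1) * ((m : ℝ) + 2) * I (m + 1) (n + 1) := by
  set W2 : Polynomial ℝ := (X ^ 2 - 1) * derivative (P (m + 1)) * P (n + 1) with hW2
  have hd : derivative W2
      = C (((m : ℝ) + 1) * ((m : ℝ) + 2)) * (P (m + 1) * P (n + 1))
        + (X ^ 2 - 1) * (Q m * Q n) := by
    have em := ode (m + 1)
    rw [hW2]
    simp only [Q_eq, derivative_mul, derivative_sub, derivative_one, derivative_X_pow] at *
    push_cast at *
    simp only [map_sub, map_mul, map_add, map_ofNat, map_natCast, map_one] at *
    linear_combination (P (n + 1) : Polynomial ℝ) * em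
  have hfun : (fun x : ℝ => (Q m).eval x * (Q n).eval x * (1 - x ^ 2))
      = fun x : ℝ => ((m : ℝ) + 1) * ((m : ℝ) + 2) * ((P (m + 1)).eval x * (P (n + 1)).eval x)
        - (derivative W2).eval x := by
    funext x
    rw [hd]
    simp
    ring
  rw [hfun, intervalIntegral.integral_sub
      (show IntervalIntegrable (fun x : ℝ => ((m : ℝ) + 1) * ((m : ℝ) + 2) * ((P (m + 1)).eval x * (P (n + 1)).eval x))
          MeasureTheory.volume (-1 : ℝ) 1 from
        (continuous_const.mul ((P (m+1)).continuous.mul (P (n+1)).continuous)).intervalIntegrable _ _)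
      (pint _),
    intervalIntegral.integral_const_mul, ftc]
  have h1 : W2.eval 1 = 0 := by rw [hW2]; simp
  have h2 : W2.eval (-1) = 0 := by rw [hW2]; simp
  rw [h1, h2, I]
  ring

lemma expand_sq (N : ℕ) (g : ℕ → ℝ → ℝ) (w : ℝ → ℝ)
    (hg : ∀ n, Continuous (g n)) (hw : Continuous w) :
    ∫ x in (-1 : ℝ)..1, (∑ n ∈ range N, g n x) ^ 2 * w x
      = ∑ m ∈ range N, ∑ n ∈ range N, ∫ x in (-1 : ℝ)..1, g m x * g n x * w x := by
  have hfun : (fun x : ℝ => (∑ n ∈ range N, g n x) ^ 2 * w x)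
      = fun x : ℝ => ∑ m ∈ range N, ∑ n ∈ range N, g m x * g n x * w x := by
    funext x
    rw [sq, Finset.sum_mul_sum, Finset.sum_mul]
    exact Finset.sum_congr rfl fun m _ => by rw [Finset.sum_mul]
  rw [hfun, intervalIntegral.integral_finset_sum]
  · exact Finset.sum_congr rfl fun m _ => by
      rw [intervalIntegral.integral_finset_sum]
      exact fun n _ => (((hg m).mul (hg n)).mul hw).intervalIntegrable _ _
  · intro m _
    exact (continuous_finset_sum _ fun n _ => ((hg m).mul (hg n)).mul hw).intervalIntegrable _ _

lemma μ_nonneg (n : ℕ) : 0 ≤ μ n := by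
  have : (0:ℝ) ≤ (n:ℝ) := Nat.cast_nonneg n
  rw [μ]; nlinarith

lemma hQb (n : ℕ) : derivative (Q n * (1 - X ^ 2)) = C (-(μ n)) * P (n + 1) := by
  have h1 : Q n * (1 - X ^ 2) = -((X ^ 2 - 1) * derivative (P (n + 1))) := by
    rw [Q_eq]; ring
  rw [h1, derivative_neg, ode (n + 1), μ]
  push_cast
  rw [show (-(((n:ℝ) + 1) * ((n:ℝ) + 2))) = -(((n:ℝ) + 1) * ((n:ℝ) + 1 + 1)) by ring]
  rw [map_neg, neg_mul]



end BubbleInv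

open BubbleInv Polynomial Finset in

theorem inverse_inequality_bubble_multiplied_polynomials :
    ∃ C : ℝ, 0 < C ∧ ∀ p : ℕ, 1 ≤ p → ∀ q : Polynomial ℝ, q.natDegree ≤ p →
      ∫ x in (-1 : ℝ)..1, (deriv (fun x : ℝ => q.eval x * (1 - x ^ 2)) x) ^ 2 ≤
        C * (p : ℝ) ^ 2 * ∫ x in (-1 : ℝ)..1, (q.eval x) ^ 2 * (1 - x ^ 2) := by
  refine ⟨6, by norm_num, ?_⟩
  intro p hp q hq
  obtain ⟨a, ha⟩ := span p q hq
  -- derivative of the bubble-multiplied polynomial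
  have hder : derivative (q * (1 - X ^ 2))
      = ∑ n ∈ range (p + 1), C (-(a n) * μ n) * P (n + 1) := by
    rw [ha, Finset.sum_mul, derivative_sum]
    refine Finset.sum_congr rfl fun n _ => ?_
    rw [mul_assoc, Polynomial.derivative_C_mul, hQb n, ← mul_assoc, ← C_mul]
    ring_nf
  have hptw : ∀ x : ℝ, deriv (fun y : ℝ => q.eval y * (1 - y ^ 2)) x
      = ∑ n ∈ range (p + 1), (-(a n) * μ n) * (P (n + 1)).eval x := by
    intro x
    have hfun : (fun y : ℝ => q.eval y * (1 - y ^ 2))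
        = fun y => (q * (1 - X ^ 2)).eval y := by funext y; simp
    rw [hfun, Polynomial.deriv, hder]
    simp [eval_finset_sum]
  -- LHS expansion
  have hL : ∫ x in (-1:ℝ)..1, (deriv (fun y : ℝ => q.eval y * (1 - y ^ 2)) x) ^ 2
      = ∑ n ∈ range (p + 1), (a n) ^ 2 * (μ n) ^ 2 * I (n + 1) (n + 1) := by
    simp only [hptw]
    have hexp := expand_sq (p + 1) (fun n x => (-(a n) * μ n) * (P (n + 1)).eval x)
      (fun _ => (1:ℝ)) (fun n => continuous_const.mul (P (n + 1)).continuous)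
      continuous_const
    simp only [mul_one] at hexp
    rw [hexp]
    refine Finset.sum_congr rfl fun m hm => ?_
    rw [Finset.sum_eq_single m]
    · have : (fun x : ℝ => ((-(a m) * μ m) * (P (m + 1)).eval x)
          * ((-(a m) * μ m) * (P (m + 1)).eval x))
          = fun x : ℝ => ((-(a m) * μ m) * (-(a m) * μ m))
            * ((P (m + 1)).eval x * (P (m + 1)).eval x) := by funext x; ring
      rw [this, intervalIntegral.integral_const_mul, ← I]
      ring
    · intro n _ hnm
      have : (fun x : ℝ => ((-(a m) * μ m) * (P (m + 1)).eval x)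
          * ((-(a n) * μ n) * (P (n + 1)).eval x))
          = fun x : ℝ => ((-(a m) * μ m) * (-(a n) * μ n))
            * ((P (m + 1)).eval x * (P (n + 1)).eval x) := by funext x; ring
      rw [this, intervalIntegral.integral_const_mul, ← I,
        orth (by omega : m + 1 ≠ n + 1), mul_zero]
    · intro hm'; exact absurd hm hm'
  -- RHS expansion
  have hR : ∫ x in (-1:ℝ)..1, (q.eval x) ^ 2 * (1 - x ^ 2)
      = ∑ n ∈ range (p + 1), (a n) ^ 2 * μ n * I (n + 1) (n + 1) := by
    have hqx : ∀ x : ℝ, q.eval x = ∑ n ∈ range (p + 1), (a n) * (Q n).eval x := by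
      intro x; rw [ha]; simp [eval_finset_sum]
    simp only [hqx]
    have hexp := expand_sq (p + 1) (fun n x => (a n) * (Q n).eval x)
      (fun x => 1 - x ^ 2) (fun n => continuous_const.mul (Q n).continuous)
      (by continuity)
    rw [hexp]
    refine Finset.sum_congr rfl fun m hm => ?_
    rw [Finset.sum_eq_single m]
    · have : (fun x : ℝ => ((a m) * (Q m).eval x) * ((a m) * (Q m).eval x) * (1 - x ^ 2))
          = fun x : ℝ => ((a m) * (a m)) * ((Q m).eval x * (Q m).eval x * (1 - x ^ 2)) := by
        funext x; ring
      rw [this, intervalIntegral.integral_const_mul, key2, ← μ]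
      ring
    · intro n _ hnm
      have : (fun x : ℝ => ((a m) * (Q m).eval x) * ((a n) * (Q n).eval x) * (1 - x ^ 2))
          = fun x : ℝ => ((a m) * (a n)) * ((Q m).eval x * (Q n).eval x * (1 - x ^ 2)) := by
        funext x; ring
      rw [this, intervalIntegral.integral_const_mul, key2,
        orth (by omega : m + 1 ≠ n + 1), mul_zero, mul_zero]
    · intro hm'; exact absurd hm hm'
  rw [hL, hR, Finset.mul_sum]
  refine Finset.sum_le_sum fun n hn => ?_
  have hn' : n ≤ p := by simpa [Nat.lt_succ_iff] using hn
  have hnp : (n : ℝ) ≤ (p : ℝ) := by exact_mod_cast hn'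
  have hp' : (1 : ℝ) ≤ (p : ℝ) := by exact_mod_cast hp
  have hμle : μ n ≤ 6 * (p : ℝ) ^ 2 := by
    rw [μ]
    nlinarith [Nat.cast_nonneg (α := ℝ) n]
  have hterm : 0 ≤ (a n) ^ 2 * μ n * I (n + 1) (n + 1) := by
    have := I_nonneg (n + 1)
    have := μ_nonneg n
    positivity
  calc (a n) ^ 2 * (μ n) ^ 2 * I (n + 1) (n + 1)
      = μ n * ((a n) ^ 2 * μ n * I (n + 1) (n + 1)) := by ring
    _ ≤ 6 * (p : ℝ) ^ 2 * ((a n) ^ 2 * μ n * I (n + 1) (n + 1)) :=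
        mul_le_mul_of_nonneg_right hμle hterm
end
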